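/- arXiv:0709.0121 — 5 statements merged into one kernel-verified Lean document; each statement's English description precedes it below -/
import Mathlib

section
/- Let $x \in \mathbb{Z}^n$ with $n \geq 2$, let $m(x) = \frac{1}{n}\sum_{j=1}^n x_j$ and $f(x) = \sum_{i=1}^n (x_i - m(x))^2$. If $f(x) > 0$, then for each standard basis vector $e_i$ we have $|f(x + e_i) - f(x)| \leq 4\sqrt{f(x)}$. -/
/-!
Writing `mean y` for the mean and `sumSqDev y` for the sum of squared deviations of a real vector
over a finite index set of size `N`, moving the `i`-th coordinate by `a` changes `sumSqDev` by
exactly `2 a (y i - mean y) + a² (1 - 1/N)`. Each deviation is bounded by `√(sumSqDev y)`, and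
for an integer vector with `sumSqDev > 0` two coordinates differ by at least `1`, so
`sumSqDev ≥ 1/2` and `1 ≤ 2 √(sumSqDev)` absorbs the constant term.
-/

open Finset

namespace SumSqDev

variable {ι : Type*} [Fintype ι]

noncomputable def mean (y : ι → ℝ) : ℝ := (∑ j, y j) / Fintype.card ι

noncomputable def sumSqDev (y : ι → ℝ) : ℝ := ∑ k, (y k - mean y) ^ 2

lemma sum_sub_mean (y : ι → ℝ) : ∑ k, (y k - mean y) = 0 := by
  rcases isEmpty_or_nonempty ι with _ | _
  · simp
  · rw [sum_sub_distrib, sum_const, card_univ, nsmul_eq_mul, mean,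
      mul_div_cancel₀ _ (by positivity), sub_self]

lemma sum_sq_sub_eq (y : ι → ℝ) (c : ℝ) :
    ∑ k, (y k - c) ^ 2 = sumSqDev y + Fintype.card ι * (mean y - c) ^ 2 := by
  have hsplit : ∀ k, (y k - c) ^ 2
      = (y k - mean y) ^ 2 + 2 * (mean y - c) * (y k - mean y) + (mean y - c) ^ 2 :=
    fun k => by ring
  simp only [hsplit, sum_add_distrib, ← mul_sum, sum_sub_mean, sum_const, card_univ,
    nsmul_eq_mul, sumSqDev]
  ring

lemma sumSqDev_nonneg (y : ι → ℝ) : 0 ≤ sumSqDev y :=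
  sum_nonneg fun _ _ => sq_nonneg _

lemma sumSqDev_le_sum_sq_sub (y : ι → ℝ) (c : ℝ) : sumSqDev y ≤ ∑ k, (y k - c) ^ 2 := by
  rw [sum_sq_sub_eq]
  exact le_add_of_nonneg_right (by positivity)

lemma sq_sub_mean_le_sumSqDev (y : ι → ℝ) (i : ι) : (y i - mean y) ^ 2 ≤ sumSqDev y :=
  single_le_sum (f := fun k => (y k - mean y) ^ 2) (fun _ _ => sq_nonneg _) (mem_univ i)

lemma abs_sub_mean_le_sqrt_sumSqDev (y : ι → ℝ) (i : ι) :
    |y i - mean y| ≤ √(sumSqDev y) := by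
  rw [← Real.sqrt_sq_eq_abs]
  exact Real.sqrt_le_sqrt (sq_sub_mean_le_sumSqDev y i)

lemma sq_sub_le_two_mul_sumSqDev [DecidableEq ι] (y : ι → ℝ) (k l : ι) :
    (y k - y l) ^ 2 ≤ 2 * sumSqDev y := by
  rcases eq_or_ne k l with rfl | hkl
  · simpa using mul_nonneg zero_le_two (sumSqDev_nonneg y)
  · have hpair : (y k - mean y) ^ 2 + (y l - mean y) ^ 2 ≤ sumSqDev y := by
      rw [← sum_pair (f := fun j => (y j - mean y) ^ 2) hkl]
      exact sum_le_sum_of_subset_of_nonneg (subset_univ _) fun _ _ _ => sq_nonneg _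
    nlinarith [sq_nonneg (y k + y l - 2 * mean y)]

variable [DecidableEq ι]

lemma mean_add_single (y : ι → ℝ) (i : ι) (a : ℝ) :
    mean (y + Pi.single i a) = mean y + a / Fintype.card ι := by
  simp only [mean, Pi.add_apply, sum_add_distrib, Finset.sum_pi_single', mem_univ, if_true,
    add_div]

lemma sumSqDev_add_single_sub (y : ι → ℝ) (i : ι) (a : ℝ) :
    sumSqDev (y + Pi.single i a) - sumSqDev y
      = 2 * a * (y i - mean y) + a ^ 2 * (1 - 1 / Fintype.card ι) := by
  have hN : (Fintype.card ι : ℝ) ≠ 0 := by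
    have : Nonempty ι := ⟨i⟩
    positivity
  set m' := mean (y + Pi.single i a) with hm'
  have hexpand :
      sumSqDev (y + Pi.single i a) = ∑ k, (y k - m') ^ 2 + 2 * a * (y i - m') + a ^ 2 := by
    have hk : ∀ k, ((y + Pi.single i a : ι → ℝ) k - m') ^ 2
        = (y k - m') ^ 2 + (if k = i then 2 * a * (y k - m') + a ^ 2 else 0) := by
      intro k
      by_cases h : k = i
      · subst h; simp only [Pi.add_apply, Pi.single_eq_same, if_true]; ring
      · simp [h]
    simp only [sumSqDev, ← hm', hk, sum_add_distrib, sum_ite_eq', mem_univ, if_true]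
    ring
  rw [hexpand, sum_sq_sub_eq, hm', mean_add_single]
  field_simp
  ring

lemma one_half_le_sumSqDev_of_pos (x : ι → ℤ) (hpos : 0 < sumSqDev (fun k => (x k : ℝ))) :
    1 / 2 ≤ sumSqDev (fun k => (x k : ℝ)) := by
  obtain ⟨l, -, -⟩ := exists_ne_zero_of_sum_ne_zero hpos.ne'
  obtain ⟨k, hkl⟩ : ∃ k, x k ≠ x l := by
    by_contra! hconst
    have hzero : ∑ k, ((x k : ℝ) - x l) ^ 2 = 0 := sum_eq_zero fun k _ => by simp [hconst k]
    linarith [sumSqDev_le_sum_sq_sub (fun k => (x k : ℝ)) (x l)]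
  have hone : (1 : ℝ) ≤ ((x k : ℝ) - x l) ^ 2 := by
    have : (1 : ℤ) ≤ (x k - x l) ^ 2 := by
      nlinarith [Int.one_le_abs (sub_ne_zero.mpr hkl), sq_abs (x k - x l)]
    exact_mod_cast this
  linarith [sq_sub_le_two_mul_sumSqDev (fun k => (x k : ℝ)) k l]

end SumSqDev

open SumSqDev in
theorem stmt_1_general (n : ℕ) (x : Fin n → ℤ) (i : Fin n)
    (m : (Fin n → ℝ) → ℝ) (hm : ∀ y, m y = (∑ j, y j) / n)
    (f : (Fin n → ℝ) → ℝ) (hf : ∀ y, f y = ∑ k, (y k - m y) ^ 2)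
    (hpos : 0 < f (fun k => (x k : ℝ))) :
    |f ((fun k => (x k : ℝ)) + Pi.single i 1) - f (fun k => (x k : ℝ))|
      ≤ 4 * Real.sqrt (f (fun k => (x k : ℝ))) := by
  obtain rfl : f = sumSqDev := funext fun y => by simp [hf, hm, sumSqDev, mean]
  set y : Fin n → ℝ := fun k => (x k : ℝ)
  have hdev := abs_le.mp (abs_sub_mean_le_sqrt_sumSqDev y i)
  have hsqrt : 1 / 2 ≤ √(sumSqDev y) :=
    Real.le_sqrt_of_sq_le (by linarith [one_half_le_sumSqDev_of_pos x hpos])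
  have hcard : (1 : ℝ) ≤ Fintype.card (Fin n) :=
    Nat.one_le_cast.mpr (Fintype.card_pos_iff.mpr ⟨i⟩)
  have hinv_le : 1 / (Fintype.card (Fin n) : ℝ) ≤ 1 := div_le_one_of_le₀ hcard (by positivity)
  have hinv_nonneg : 0 ≤ 1 / (Fintype.card (Fin n) : ℝ) := by positivity
  rw [sumSqDev_add_single_sub, abs_le]
  constructor <;> linarith

theorem stmt_1 (n : ℕ) (hn : 2 ≤ n) (x : Fin n → ℤ) (i : Fin n)
    (m : (Fin n → ℝ) → ℝ) (hm : ∀ y, m y = (∑ j, y j) / n)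
    (f : (Fin n → ℝ) → ℝ) (hf : ∀ y, f y = ∑ k, (y k - m y) ^ 2)
    (hpos : 0 < f (fun k => (x k : ℝ))) :
    |f ((fun k => (x k : ℝ)) + Pi.single i 1) - f (fun k => (x k : ℝ))|
      ≤ 4 * Real.sqrt (f (fun k => (x k : ℝ))) :=
  stmt_1_general n x i m hm f hf hpos
end

section
/- Let $S_1, \dots, S_{\mathcal{K}}$ be nonempty subsets of $\{1,\dots,n\}$ with union $\{1,\dots,n\}$, and $\lambda_i > 0$ with $\sum_i \lambda_i = 1$. Suppose $\sum_{j \in J} \lambda_j \leq \frac{|\bigcup_{j \in J} S_j|}{n}$ for all $J \subseteq \{1,\dots,\mathcal{K}\}$. Then there exist nonnegative reals $(\alpha_{ij})$, $j \in S_i$, such that $\sum_{j \in S_i} \alpha_{ij} = \lambda_i$ for every $i$ and $\sum_{i : \ell \in S_i} \alpha_{i\ell} = \frac{1}{n}$ for every node $\ell$. -/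
/-!
By Hahn–Banach it suffices to show that the target vector `μ` is not strictly separated from the
compact convex set of all `∑ᵢ λᵢ xᵢ` with `xᵢ` in the simplex spanned by the nodes of `Sᵢ`.
Testing a functional `c` on this set at the vertices maximising `c` on each `Sᵢ` reduces this to
the dual inequality `∑ₗ μₗ cₗ ≤ ∑ᵢ λᵢ max_{Sᵢ} c`, a discrete layer-cake argument: raising the
lowest level `m` of `c` to the next level `t` increases the left side by `(t - m) μ(A)`, where
`A = {c = m}`, and the right side by `(t - m) λ(J)`, where `J = {i | Sᵢ ⊆ A}`; the Hall condition
applied to `J` says `λ(J) ≤ μ(A)`, and a constant `c` gives equality.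
-/

open Finset

section DualInequality

variable {ι α 𝕜 : Type*} [Fintype ι] [Fintype α] [DecidableEq α]
  [CommRing 𝕜] [LinearOrder 𝕜] [IsStrictOrderedRing 𝕜]
  {S : ι → Finset α} {lam : ι → 𝕜} {μ : α → 𝕜}

theorem sum_mul_sup'_max_sub_sum_mul_max_le (hS : ∀ i, (S i).Nonempty) (hμ : ∀ ℓ, 0 ≤ μ ℓ)
    (hall : ∀ J : Finset ι, ∑ i ∈ J, lam i ≤ ∑ ℓ ∈ J.biUnion S, μ ℓ)
    {c : α → 𝕜} {m t : 𝕜} (hmt : m ≤ t) (hc : ∀ ℓ, c ℓ < t → c ℓ = m) :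
    ∑ i, lam i * (S i).sup' (hS i) (fun ℓ => max (c ℓ) t) - ∑ ℓ, μ ℓ * max (c ℓ) t ≤
      ∑ i, lam i * (S i).sup' (hS i) c - ∑ ℓ, μ ℓ * c ℓ := by
  set A := univ.filter fun ℓ => c ℓ < t
  set J := univ.filter fun i => (S i).sup' (hS i) c < t
  have hA : ∑ ℓ, μ ℓ * max (c ℓ) t = ∑ ℓ, μ ℓ * c ℓ + (t - m) * ∑ ℓ ∈ A, μ ℓ := by
    have : ∀ ℓ, μ ℓ * max (c ℓ) t = μ ℓ * c ℓ + if c ℓ < t then (t - m) * μ ℓ else 0 := by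
      intro ℓ
      split_ifs with h
      · rw [max_eq_right h.le, hc ℓ h]; ring
      · rw [max_eq_left (not_lt.1 h), add_zero]
    simp only [this, sum_add_distrib, A, sum_filter, mul_sum, mul_ite, mul_zero]
  have hsup : ∀ i, (S i).sup' (hS i) (fun ℓ => max (c ℓ) t) = max ((S i).sup' (hS i) c) t :=
    fun i => ((S i).apply_sup'_eq_sup'_comp (hS i) (max · t) fun x y =>
      sup_sup_distrib_right x y t).symm
  have hJ : ∑ i, lam i * (S i).sup' (hS i) (fun ℓ => max (c ℓ) t) =
      ∑ i, lam i * (S i).sup' (hS i) c + (t - m) * ∑ i ∈ J, lam i := by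
    have : ∀ i, lam i * (S i).sup' (hS i) (fun ℓ => max (c ℓ) t) =
        lam i * (S i).sup' (hS i) c + if (S i).sup' (hS i) c < t then (t - m) * lam i else 0 := by
      intro i
      rw [hsup]
      split_ifs with h
      · obtain ⟨j, -, hj⟩ := (S i).exists_mem_eq_sup' (hS i) c
        rw [max_eq_right h.le, hj, hc j (hj ▸ h)]; ring
      · rw [max_eq_left (not_lt.1 h), add_zero]
    simp only [this, sum_add_distrib, J, sum_filter, mul_sum, mul_ite, mul_zero]
  have hJA : J.biUnion S ⊆ A := by
    intro ℓ hℓ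
    obtain ⟨i, hi, hℓi⟩ := mem_biUnion.1 hℓ
    exact mem_filter.2 ⟨mem_univ ℓ, ((S i).le_sup' c hℓi).trans_lt (mem_filter.1 hi).2⟩
  have hcut : ∑ i ∈ J, lam i ≤ ∑ ℓ ∈ A, μ ℓ :=
    (hall J).trans (sum_le_sum_of_subset_of_nonneg hJA fun ℓ _ _ => hμ ℓ)
  rw [hA, hJ]
  linarith [mul_le_mul_of_nonneg_left hcut (sub_nonneg.2 hmt)]

theorem sum_mul_le_sum_mul_sup' (hS : ∀ i, (S i).Nonempty) (hμ : ∀ ℓ, 0 ≤ μ ℓ)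
    (hsum : ∑ i, lam i = ∑ ℓ, μ ℓ)
    (hall : ∀ J : Finset ι, ∑ i ∈ J, lam i ≤ ∑ ℓ ∈ J.biUnion S, μ ℓ) (c : α → 𝕜) :
    ∑ ℓ, μ ℓ * c ℓ ≤ ∑ i, lam i * (S i).sup' (hS i) c := by
  suffices key : ∀ V : Finset 𝕜, ∀ c : α → 𝕜, (∀ ℓ, c ℓ ∈ V) →
      ∑ ℓ, μ ℓ * c ℓ ≤ ∑ i, lam i * (S i).sup' (hS i) c from
    key _ c fun ℓ => mem_image_of_mem c (mem_univ ℓ)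
  intro V
  induction V using Finset.induction_on_min with
  | empty =>
    intro c hc
    have : IsEmpty α := ⟨fun ℓ => by simpa using hc ℓ⟩
    have : IsEmpty ι := ⟨fun i => (hS i).ne_empty (eq_empty_of_isEmpty _)⟩
    simp
  | insert a V ha ih =>
    intro c hc
    rcases V.eq_empty_or_nonempty with rfl | hV
    · obtain rfl : c = fun _ => a := funext fun ℓ => by simpa using hc ℓ
      simp only [sup'_const, ← sum_mul, hsum, le_refl]
    · set b := V.min' hV
      have hcb : ∀ ℓ, c ℓ < b → c ℓ = a := fun ℓ h =>
        (mem_insert.1 (hc ℓ)).resolve_right fun hℓ => (V.min'_le _ hℓ).not_gt h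
      have hmax : ∀ ℓ, max (c ℓ) b ∈ V := by
        intro ℓ
        rcases lt_or_ge (c ℓ) b with h | h
        · rw [max_eq_right h.le]; exact V.min'_mem hV
        · rw [max_eq_left h]
          refine (mem_insert.1 (hc ℓ)).resolve_left fun hℓ => ?_
          exact (ha b (V.min'_mem hV)).not_ge (hℓ ▸ h)
      have := sum_mul_sup'_max_sub_sum_mul_max_le hS hμ hall (ha b (V.min'_mem hV)).le hcb
      linarith [ih _ hmax]

end DualInequality

theorem convexHull_image_single_subset {𝕜 α : Type*} [Field 𝕜] [LinearOrder 𝕜]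
    [IsStrictOrderedRing 𝕜] [DecidableEq α] (s : Finset α) :
    convexHull 𝕜 ((fun j => Pi.single j (1 : 𝕜)) '' (s : Set α)) ⊆
      {v | (∀ j, 0 ≤ v j) ∧ (∀ j ∉ s, v j = 0) ∧ ∑ j ∈ s, v j = 1} := by
  refine convexHull_min ?_ ?_
  · rintro _ ⟨j, hj, rfl⟩
    refine ⟨fun k => ?_, fun k hk => Pi.single_eq_of_ne (ne_of_mem_of_not_mem hj hk).symm _, ?_⟩
    · simp only [Pi.single_apply]; split_ifs <;> simp
    · rw [sum_pi_single' j 1 s]; simp [mem_coe.1 hj]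
  · rintro v ⟨hv0, hvs, hv1⟩ w ⟨hw0, hws, hw1⟩ a b ha hb hab
    refine ⟨fun j => ?_, fun j hj => ?_, ?_⟩
    · exact add_nonneg (mul_nonneg ha (hv0 j)) (mul_nonneg hb (hw0 j))
    · simp [hvs j hj, hws j hj]
    · simp [sum_add_distrib, ← mul_sum, hv1, hw1, hab]

theorem exists_fractional_matching_of_hall {ι α : Type*} [Fintype ι] [Fintype α] [DecidableEq α]
    {S : ι → Finset α} (hS : ∀ i, (S i).Nonempty) {lam : ι → ℝ} {μ : α → ℝ}
    (hlam : ∀ i, 0 ≤ lam i) (hμ : ∀ ℓ, 0 ≤ μ ℓ) (hsum : ∑ i, lam i = ∑ ℓ, μ ℓ)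
    (hall : ∀ J : Finset ι, ∑ i ∈ J, lam i ≤ ∑ ℓ ∈ J.biUnion S, μ ℓ) :
    ∃ x : ι → α → ℝ, (∀ i, ∀ j ∈ S i, 0 ≤ x i j) ∧ (∀ i, ∑ j ∈ S i, x i j = lam i) ∧
      ∀ ℓ, ∑ i, (if ℓ ∈ S i then x i ℓ else 0) = μ ℓ := by
  set P : Set (ι → α → ℝ) :=
    Set.univ.pi fun i => convexHull ℝ ((fun j => Pi.single j 1) '' (S i : Set α))
  set L : (ι → α → ℝ) →ₗ[ℝ] α → ℝ := ∑ i, lam i • LinearMap.proj i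
  have hL : ∀ v, L v = ∑ i, lam i • v i := by simp [L]
  have hμP : μ ∈ L '' P := by
    by_contra hμ_notMem
    have hconv : Convex ℝ (L '' P) :=
      (convex_pi fun i _ => convex_convexHull ℝ _).linear_image L
    have hclosed : IsClosed (L '' P) :=
      ((isCompact_univ_pi fun i =>
        ((S i).finite_toSet.image _).isCompact_convexHull (𝕜 := ℝ)).image
          L.continuous_of_finiteDimensional).isClosed
    obtain ⟨f, u, hfP, hfμ⟩ := geometric_hahn_banach_closed_point hconv hclosed hμ_notMem
    set c : α → ℝ := fun j => f (Pi.single j 1)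
    choose j₀ hj₀ hj₀c using fun i => (S i).exists_mem_eq_sup' (hS i) c
    have hlt : ∑ i, lam i * (S i).sup' (hS i) c < u := by
      have := hfP _ ⟨fun i => Pi.single (j₀ i) 1,
        fun i _ => subset_convexHull ℝ _ (Set.mem_image_of_mem _ (hj₀ i)), rfl⟩
      simpa [hL, hj₀c, c] using this
    have hfμ' : f μ = ∑ ℓ, μ ℓ * c ℓ := by
      conv_lhs => rw [← univ_sum_single μ]
      have hsingle : ∀ ℓ, Pi.single ℓ (μ ℓ) = μ ℓ • Pi.single ℓ (1 : ℝ) := fun ℓ => by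
        rw [← Pi.single_smul', smul_eq_mul, mul_one]
      simp only [hsingle, map_sum, map_smul, smul_eq_mul, c]
    linarith [sum_mul_le_sum_mul_sup' hS hμ hsum hall c]
  obtain ⟨v, hvP, rfl⟩ := hμP
  have hv := fun i => convexHull_image_single_subset (𝕜 := ℝ) (S i) (hvP i trivial)
  refine ⟨fun i j => lam i * v i j, fun i j _ => mul_nonneg (hlam i) ((hv i).1 j),
    fun i => by rw [← mul_sum, (hv i).2.2, mul_one], fun ℓ => ?_⟩
  rw [hL, Finset.sum_apply]
  refine sum_congr rfl fun i _ => ?_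
  split_ifs with h
  · rfl
  · simp [(hv i).2.1 ℓ h]

theorem stmt_9_general (n K : ℕ) (hn : 0 < n)
    (S : Fin K → Finset (Fin n)) (hSne : ∀ i, (S i).Nonempty)
    (lam : Fin K → ℝ) (hlam : ∀ i, 0 < lam i) (hsum : ∑ i, lam i = 1)
    (hcond : ∀ J : Finset (Fin K), ∑ j ∈ J, lam j ≤ (J.biUnion S).card / n) :
    ∃ α : Fin K → Fin n → ℝ,
      (∀ i, ∀ j ∈ S i, 0 ≤ α i j) ∧
      (∀ i, ∑ j ∈ S i, α i j = lam i) ∧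
      (∀ ℓ : Fin n, ∑ i, (if ℓ ∈ S i then α i ℓ else 0) = 1 / n) := by
  have hcard : ∀ s : Finset (Fin n), (#s : ℝ) / n = ∑ ℓ ∈ s, (1 / n : ℝ) := fun s => by
    rw [sum_const, nsmul_eq_mul, mul_one_div]
  refine exists_fractional_matching_of_hall hSne (fun i => (hlam i).le) (fun _ => by positivity)
    ?_ fun J => (hcond J).trans_eq (hcard _)
  rw [hsum, ← hcard univ, card_univ, Fintype.card_fin, div_self (Nat.cast_ne_zero.2 hn.ne')]

theorem stmt_9 (n K : ℕ) (hn : 0 < n)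
    (S : Fin K → Finset (Fin n)) (hSne : ∀ i, (S i).Nonempty)
    (hcover : ∀ ℓ : Fin n, ∃ i, ℓ ∈ S i)
    (lam : Fin K → ℝ) (hlam : ∀ i, 0 < lam i) (hsum : ∑ i, lam i = 1)
    (hcond : ∀ J : Finset (Fin K), ∑ j ∈ J, lam j ≤ (J.biUnion S).card / n) :
    ∃ α : Fin K → Fin n → ℝ,
      (∀ i, ∀ j ∈ S i, 0 ≤ α i j) ∧
      (∀ i, ∑ j ∈ S i, α i j = lam i) ∧
      (∀ ℓ : Fin n, ∑ i, (if ℓ ∈ S i then α i ℓ else 0) = 1 / n) :=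
  stmt_9_general n K hn S hSne lam hlam hsum hcond
end

section
/- Let $D$ be the set $F(E(\Lambda_1 \times \cdots \times \Lambda_{\mathcal{K}})) \subset \mathbb{R}^n$, where the $\Lambda_i$ are standard simplices, $E$ is the linear map with $E(p)_\ell = \sum_{i=1}^{\mathcal{K}} \sum_{j : s^i_j = \ell} \lambda_i p^{(i)}_j$, and $F$ is the mean-centering map. Then $0 \in \operatorname{ri} D$ (the relative interior of $D$) if and only if there exists a strictly positive solution $(\alpha_{ij})$ of the system: $\sum_{j \in S_i} \alpha_{ij} = \lambda_i$ for all $i$ and $\sum_{i : \ell \in S_i} \alpha_{i\ell} = \frac{1}{n}$ for all $\ell$. -/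
lemma aux_ext13 {W : Type*} [NormedAddCommGroup W] [NormedSpace ℝ W] {s : Set W} {z x : W}
    (hz : z ∈ intrinsicInterior ℝ s) (hx : x ∈ s) : ∃ ε : ℝ, 0 < ε ∧ ε • (z - x) + z ∈ s := by
  obtain ⟨y, hy, hyz⟩ := mem_intrinsicInterior.1 hz
  have hzs : z ∈ s := intrinsicInterior_subset hz
  have hzA : z ∈ affineSpan ℝ s := subset_affineSpan ℝ s hzs
  have hxA : x ∈ affineSpan ℝ s := subset_affineSpan ℝ s hx
  have hmem : ∀ t : ℝ, t • (z - x) + z ∈ affineSpan ℝ s := fun t => by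
    have := AffineSubspace.smul_vsub_vadd_mem (affineSpan ℝ s) t hzA hxA hzA
    simpa using this
  set f : ℝ → affineSpan ℝ s := fun t => ⟨t • (z - x) + z, hmem t⟩ with hf
  have hfc : Continuous f := Continuous.subtype_mk (by fun_prop) _
  have h0 : f 0 = y := Subtype.ext (by simp [hf, hyz])
  have hU : IsOpen (f ⁻¹' interior ((↑) ⁻¹' s : Set (affineSpan ℝ s))) :=
    isOpen_interior.preimage hfc
  have h0U : (0:ℝ) ∈ f ⁻¹' interior ((↑) ⁻¹' s : Set (affineSpan ℝ s)) := by
    simp only [Set.mem_preimage, h0]; exact hy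
  obtain ⟨δ, hδ, hball⟩ := Metric.isOpen_iff.1 hU 0 h0U
  refine ⟨δ/2, by positivity, ?_⟩
  have h1 : f (δ/2) ∈ interior ((↑) ⁻¹' s : Set (affineSpan ℝ s)) := by
    apply hball
    simp only [Metric.mem_ball, Real.dist_eq, sub_zero]
    rw [abs_of_pos (by positivity)]; linarith
  have h2 : f (δ/2) ∈ ((↑) ⁻¹' s : Set (affineSpan ℝ s)) := interior_subset h1
  exact h2

lemma aux_ball13 {W : Type*} [NormedAddCommGroup W] [NormedSpace ℝ W] {s : Set W} {z : W}
    (hz : z ∈ s)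
    (h : ∃ δ : ℝ, 0 < δ ∧ ∀ w ∈ (affineSpan ℝ s : Set W), dist w z < δ → w ∈ s) :
    z ∈ intrinsicInterior ℝ s := by
  have hzA : z ∈ affineSpan ℝ s := subset_affineSpan ℝ s hz
  obtain ⟨δ, hδ, hball⟩ := h
  refine mem_intrinsicInterior.2 ⟨⟨z, hzA⟩, ?_, rfl⟩
  rw [mem_interior_iff_mem_nhds, Metric.mem_nhds_iff]
  refine ⟨δ, hδ, ?_⟩
  rintro ⟨w, hwA⟩ hwball
  have hd : dist w z < δ := by simpa [Subtype.dist_eq] using hwball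
  exact hball w hwA hd

set_option maxHeartbeats 2000000 in
theorem stmt_13 (n K : ℕ) (hn : 0 < n)
    (S : Fin K → Finset (Fin n)) (hSne : ∀ i, (S i).Nonempty)
    (hcover : ∀ ℓ : Fin n, ∃ i, ℓ ∈ S i)
    (lam : Fin K → ℝ) (hlam : ∀ i, 0 < lam i) (hsum : ∑ i, lam i = 1)
    (Λ : Set (Fin K → Fin n → ℝ))
    (hΛ : Λ = {p | ∀ i, (∀ j ∈ S i, 0 ≤ p i j) ∧ ∑ j ∈ S i, p i j = 1})
    (E : (Fin K → Fin n → ℝ) → (Fin n → ℝ))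
    (hE : ∀ p ℓ, E p ℓ = ∑ i, lam i * (if ℓ ∈ S i then p i ℓ else 0))
    (F : (Fin n → ℝ) → (Fin n → ℝ))
    (hF : ∀ x i, F x i = x i - (∑ j, x j) / n)
    (D : Set (Fin n → ℝ)) (hD : D = (F ∘ E) '' Λ) :
    0 ∈ intrinsicInterior ℝ D ↔
      ∃ α : Fin K → Fin n → ℝ,
        (∀ i, ∀ j ∈ S i, 0 < α i j) ∧
        (∀ i, ∑ j ∈ S i, α i j = lam i) ∧
        (∀ ℓ : Fin n, ∑ i, (if ℓ ∈ S i then α i ℓ else 0) = 1 / n) := by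
  subst hΛ hD
  have hKpos : 0 < K := by
    obtain ⟨i, _⟩ := hcover ⟨0, hn⟩
    exact i.pos
  have hnR : (0:ℝ) < n := by exact_mod_cast hn
  -- linearity of F ∘ E
  have hadd : ∀ p q, F (E (p + q)) = F (E p) + F (E q) := by
    intro p q
    have key : ∀ m, (∑ i, lam i * (if m ∈ S i then p i m + q i m else 0)) =
        (∑ i, lam i * (if m ∈ S i then p i m else 0)) +
        (∑ i, lam i * (if m ∈ S i then q i m else 0)) := by
      intro m
      rw [← Finset.sum_add_distrib]
      refine Finset.sum_congr rfl fun i _ => ?_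
      by_cases h : m ∈ S i <;> simp [h, mul_add]
    funext ℓ
    simp only [hF, hE, Pi.add_apply, key, Finset.sum_add_distrib]
    ring
  have hsmul : ∀ (c : ℝ) p, F (E (c • p)) = c • F (E p) := by
    intro c p
    have key : ∀ m, (∑ i, lam i * (if m ∈ S i then c * p i m else 0)) =
        c * (∑ i, lam i * (if m ∈ S i then p i m else 0)) := by
      intro m
      rw [Finset.mul_sum]
      refine Finset.sum_congr rfl fun i _ => ?_
      by_cases h : m ∈ S i <;> · simp [h]; try ring
    funext ℓ
    simp only [hF, hE, Pi.smul_apply, smul_eq_mul, key, ← Finset.mul_sum]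
    ring
  have hLlin : IsLinearMap ℝ (F ∘ E) := ⟨hadd, hsmul⟩
  set L : (Fin K → Fin n → ℝ) →ₗ[ℝ] (Fin n → ℝ) := IsLinearMap.mk' (F ∘ E) hLlin with hLdef
  have hLapp : ∀ p, L p = F (E p) := fun p => rfl
  -- key computations
  have hsumE : ∀ p, (∀ i, ∑ j ∈ S i, p i j = 1) → ∑ ℓ, E p ℓ = 1 := by
    intro p hp
    calc ∑ ℓ, E p ℓ = ∑ ℓ, ∑ i, lam i * (if ℓ ∈ S i then p i ℓ else 0) := by simp only [hE]
      _ = ∑ i, ∑ ℓ, (if ℓ ∈ S i then lam i * p i ℓ else 0) := by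
          rw [Finset.sum_comm]
          exact Finset.sum_congr rfl fun i _ => Finset.sum_congr rfl fun ℓ _ => by
            rw [mul_ite, mul_zero]
      _ = ∑ i, ∑ ℓ ∈ S i, lam i * p i ℓ := by
          exact Finset.sum_congr rfl fun i _ => by rw [Finset.sum_ite_mem, Finset.univ_inter]
      _ = ∑ i, lam i := Finset.sum_congr rfl fun i _ => by rw [← Finset.mul_sum, hp i, mul_one]
      _ = 1 := hsum
  have hzeroE : ∀ p, (∀ i, ∑ j ∈ S i, p i j = 1) → F (E p) = 0 → ∀ ℓ, E p ℓ = 1/n := by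
    intro p hp hFE ℓ
    have h1 := congrFun hFE ℓ
    rw [hF, hsumE p hp, Pi.zero_apply] at h1
    linarith
  have hEzero : ∀ p, (∀ i, ∑ j ∈ S i, p i j = 1) → (∀ ℓ, E p ℓ = 1/n) → F (E p) = 0 := by
    intro p hp hc
    funext ℓ
    rw [hF, hsumE p hp, hc ℓ, Pi.zero_apply]
    ring
  constructor
  · -- forward direction
    intro h0ri
    set q0 : Fin K → Fin n → ℝ := fun i j => if j ∈ S i then ((S i).card : ℝ)⁻¹ else 0 with hq0
    have hcard : ∀ i, (0:ℝ) < (S i).card := by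
      intro i; exact_mod_cast Finset.card_pos.2 (hSne i)
    have hq0row : ∀ i, ∑ j ∈ S i, q0 i j = 1 := by
      intro i
      rw [Finset.sum_congr rfl (fun j hj => by simp only [hq0]; rw [if_pos hj])]
      rw [Finset.sum_const, nsmul_eq_mul, mul_inv_cancel₀ (hcard i).ne']
    have hq0pos : ∀ i, ∀ j ∈ S i, 0 < q0 i j := by
      intro i j hj; simp only [hq0]; rw [if_pos hj]; exact inv_pos.2 (hcard i)
    have hq0mem : q0 ∈ {p | ∀ i, (∀ j ∈ S i, 0 ≤ p i j) ∧ ∑ j ∈ S i, p i j = 1} :=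
      fun i => ⟨fun j hj => (hq0pos i j hj).le, hq0row i⟩
    set w : Fin n → ℝ := F (E q0) with hw
    have hwD : w ∈ (F ∘ E) '' {p | ∀ i, (∀ j ∈ S i, 0 ≤ p i j) ∧ ∑ j ∈ S i, p i j = 1} :=
      ⟨q0, hq0mem, rfl⟩
    obtain ⟨ε, hε, hεD⟩ := aux_ext13 h0ri hwD
    obtain ⟨p', hp'Λ, hp'val⟩ := hεD
    have hp'c : F (E p') = ε • ((0 : Fin n → ℝ) - w) + 0 := hp'val
    have hp'val' : F (E p') = -(ε • w) := by
      rw [hp'c]; funext ℓ; simp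
    have h1ε : (0:ℝ) < 1 + ε := by linarith
    set c : ℝ := (1 + ε)⁻¹ with hc
    have hcpos : 0 < c := inv_pos.2 h1ε
    set p'' : Fin K → Fin n → ℝ := fun i j => c * p' i j + (ε * c) * q0 i j with hp''
    have hp''row : ∀ i, ∑ j ∈ S i, p'' i j = 1 := by
      intro i
      simp only [hp'']
      rw [Finset.sum_add_distrib, ← Finset.mul_sum, ← Finset.mul_sum, (hp'Λ i).2, hq0row i]
      simp only [mul_one, hc]
      field_simp
    have hp''pos : ∀ i, ∀ j ∈ S i, 0 < p'' i j := by
      intro i j hj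
      simp only [hp'']
      have h1 : 0 ≤ c * p' i j := mul_nonneg hcpos.le ((hp'Λ i).1 j hj)
      have h2 : 0 < (ε * c) * q0 i j := mul_pos (mul_pos hε hcpos) (hq0pos i j hj)
      linarith
    have hp''smul : p'' = c • p' + (ε * c) • q0 := by
      funext i j; simp [hp'', Pi.smul_apply, smul_eq_mul]
    have hFEp'' : F (E p'') = 0 := by
      rw [hp''smul, hadd, hsmul, hsmul, hp'val']
      funext ℓ
      simp only [Pi.add_apply, Pi.smul_apply, Pi.neg_apply, smul_eq_mul, Pi.zero_apply]
      ring
    have hEp'' : ∀ ℓ, E p'' ℓ = 1/n := hzeroE p'' hp''row hFEp''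
    refine ⟨fun i j => lam i * p'' i j, ?_, ?_, ?_⟩
    · intro i j hj; exact mul_pos (hlam i) (hp''pos i j hj)
    · intro i; rw [← Finset.mul_sum, hp''row i, mul_one]
    · intro ℓ
      have h3 := hEp'' ℓ
      rw [hE] at h3
      rw [← h3]
      exact Finset.sum_congr rfl fun i _ => by by_cases h : ℓ ∈ S i <;> simp [h]
  · -- backward direction
    rintro ⟨α, hαpos, hrow, hcol⟩
    set p0 : Fin K → Fin n → ℝ := fun i j => if j ∈ S i then α i j / lam i else 0 with hp0
    have hp0pos : ∀ i, ∀ j ∈ S i, 0 < p0 i j := by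
      intro i j hj
      simp only [hp0]; rw [if_pos hj]
      exact div_pos (hαpos i j hj) (hlam i)
    have hp0row : ∀ i, ∑ j ∈ S i, p0 i j = 1 := by
      intro i
      rw [Finset.sum_congr rfl (fun j hj => by simp only [hp0]; rw [if_pos hj])]
      rw [← Finset.sum_div, hrow i, div_self (hlam i).ne']
    have hp0mem : p0 ∈ {p | ∀ i, (∀ j ∈ S i, 0 ≤ p i j) ∧ ∑ j ∈ S i, p i j = 1} :=
      fun i => ⟨fun j hj => (hp0pos i j hj).le, hp0row i⟩
    have hEp0 : ∀ ℓ, E p0 ℓ = 1/n := by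
      intro ℓ
      rw [hE]
      calc ∑ i, lam i * (if ℓ ∈ S i then p0 i ℓ else 0)
          = ∑ i, (if ℓ ∈ S i then α i ℓ else 0) := by
            refine Finset.sum_congr rfl fun i _ => ?_
            by_cases h : ℓ ∈ S i
            · simp only [hp0, if_pos h]
              rw [mul_comm, div_mul_cancel₀ _ (hlam i).ne']
            · simp [h]
        _ = 1/n := hcol ℓ
    have hFEp0 : F (E p0) = 0 := hEzero p0 hp0row hEp0
    have h0mem : (0 : Fin n → ℝ) ∈
        (F ∘ E) '' {p | ∀ i, (∀ j ∈ S i, 0 ≤ p i j) ∧ ∑ j ∈ S i, p i j = 1} :=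
      ⟨p0, hp0mem, hFEp0⟩
    -- the submodule H₀ of row-sum-zero tableaux
    set H₀ : Submodule ℝ (Fin K → Fin n → ℝ) :=
      { carrier := {q | ∀ i, ∑ j ∈ S i, q i j = 0}
        add_mem' := fun {a b} ha hb i => by
          simp only [Pi.add_apply, Finset.sum_add_distrib, ha i, hb i, add_zero]
        zero_mem' := fun i => by simp
        smul_mem' := fun c q hq i => by
          simp only [Pi.smul_apply, smul_eq_mul, ← Finset.mul_sum, hq i, mul_zero] } with hH₀
    have hH₀mem : ∀ q, q ∈ H₀ ↔ ∀ i, ∑ j ∈ S i, q i j = 0 := fun q => Iff.rfl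
    have hLp0 : L p0 = 0 := by rw [hLapp]; exact hFEp0
    set T : Submodule ℝ (Fin n → ℝ) := Submodule.map L H₀ with hT
    have hDsubT : (F ∘ E) '' {p | ∀ i, (∀ j ∈ S i, 0 ≤ p i j) ∧ ∑ j ∈ S i, p i j = 1}
        ⊆ (T : Set (Fin n → ℝ)) := by
      rintro _ ⟨p, hpΛ, rfl⟩
      have hq : p - p0 ∈ H₀ := by
        rw [hH₀mem]
        intro i
        simp only [Pi.sub_apply, Finset.sum_sub_distrib, (hpΛ i).2, hp0row i, sub_self]
      have heq : L (p - p0) = (F ∘ E) p := by rw [map_sub, hLp0, sub_zero, hLapp]; rfl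
      exact heq ▸ Submodule.mem_map_of_mem hq
    have hmapsto : ∀ x ∈ H₀, L x ∈ T := fun x hx => Submodule.mem_map_of_mem hx
    set ℓ' : H₀ →ₗ[ℝ] T := L.restrict hmapsto with hℓ'
    have hsurj : LinearMap.range ℓ' = ⊤ := by
      rw [LinearMap.range_eq_top]
      rintro ⟨v, hv⟩
      obtain ⟨q, hq, hqv⟩ := hv
      exact ⟨⟨q, hq⟩, Subtype.ext (by simpa [hℓ', LinearMap.restrict_apply] using hqv)⟩
    obtain ⟨g, hg⟩ := ℓ'.exists_rightInverse_of_surjective hsurj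
    have hginv : ∀ x : T, L ((g x : H₀) : Fin K → Fin n → ℝ) = (x : Fin n → ℝ) := by
      intro x
      have h1 : ℓ' (g x) = x := DFunLike.congr_fun hg x
      have h2 := congrArg (Subtype.val) h1
      simpa [hℓ', LinearMap.restrict_apply] using h2
    -- minimum value of p0 on the support
    set P : Finset (Fin K × Fin n) := Finset.univ.filter (fun ij => ij.2 ∈ S ij.1) with hP
    have hPne : P.Nonempty := by
      obtain ⟨j0, hj0⟩ := hSne ⟨0, hKpos⟩
      exact ⟨(⟨0, hKpos⟩, j0), by simp [hP, hj0]⟩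
    set ε0 : ℝ := P.inf' hPne (fun ij => p0 ij.1 ij.2) with hε0
    have hε0pos : 0 < ε0 := by
      rw [hε0, Finset.lt_inf'_iff]
      rintro ⟨i, j⟩ hij
      exact hp0pos i j (by simpa [hP] using hij)
    have hε0le : ∀ i, ∀ j ∈ S i, ε0 ≤ p0 i j := fun i j hj =>
      Finset.inf'_le (fun ij => p0 ij.1 ij.2) (show ((i, j) : Fin K × Fin n) ∈ P by simp [hP, hj])
    -- continuity of the section
    have hgc : Continuous g := g.continuous_of_finiteDimensional
    obtain ⟨δ, hδpos, hδ⟩ := Metric.continuousAt_iff.1 (hgc.continuousAt (x := 0)) ε0 hε0pos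
    refine aux_ball13 h0mem ⟨δ, hδpos, ?_⟩
    intro v hvA hvd
    have hvT : v ∈ T := by
      have hle : affineSpan ℝ ((F ∘ E) '' {p | ∀ i, (∀ j ∈ S i, 0 ≤ p i j) ∧ ∑ j ∈ S i, p i j = 1})
          ≤ T.toAffineSubspace := affineSpan_le.2 hDsubT
      exact hle hvA
    set vT : T := ⟨v, hvT⟩ with hvT'
    have hvTd : dist vT (0 : T) < δ := by
      simpa [hvT', Subtype.dist_eq] using hvd
    have hgw : dist (g vT) (g 0) < ε0 := hδ hvTd
    have hgwn : ‖((g vT : H₀) : Fin K → Fin n → ℝ)‖ < ε0 := by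
      have : g (0 : T) = 0 := map_zero g
      rw [this, dist_zero_right] at hgw
      exact hgw
    obtain ⟨qv, hqH, hqn, hqL⟩ : ∃ qv : Fin K → Fin n → ℝ,
        (∀ i, ∑ j ∈ S i, qv i j = 0) ∧ ‖qv‖ < ε0 ∧ L qv = v :=
      ⟨((g vT : H₀) : Fin K → Fin n → ℝ), (g vT).2, hgwn, hginv vT⟩
    have hLpq : L (p0 + qv) = v := by rw [map_add, hLp0, zero_add, hqL]
    refine ⟨fun i j => p0 i j + qv i j, fun i => ⟨?_, ?_⟩, ?_⟩
    · intro j hj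
      have h1 := hε0le i j hj
      have h2 : |qv i j| ≤ ‖qv‖ := (norm_le_pi_norm (qv i) j).trans (norm_le_pi_norm qv i)
      have h4 := (abs_lt.1 (lt_of_le_of_lt h2 hqn)).1
      show (0:ℝ) ≤ p0 i j + qv i j
      linarith
    · rw [Finset.sum_add_distrib, hp0row i, hqH i, add_zero]
    · exact hLpq
end

section
/- Let $S_1, \dots, S_{\mathcal{K}}$ cover $\{1,\dots,n\}$ and suppose the graph $\mathcal{G}$ on vertices $\{1,\dots,n\}$, with an edge between $j$ and $k$ whenever $j, k \in S_i$ for some $i$, is connected. Let $x \in \mathbb{R}^n$ with mean $m(x)$. Then for every index $i_0 \in \{1, \dots, \mathcal{K}\}$, $\max_{j \in S_{i_0}} |x_j - m(x)| \leq \sum_{i=1}^{\mathcal{K}} \big( \max_{j \in S_i} x_j - \min_{j \in S_i} x_j \big)$. -/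
/-!
Grow a family `T` of neighborhoods, starting from `S i₀`, keeping the invariant that the values
of `x` on `⋃ i ∈ T, S i` differ by at most the sum of the spreads of the members of `T`. As long
as the union misses a vertex, connectivity yields an edge leaving it, hence a new neighborhood
meeting the union, and gluing along the common vertex preserves the invariant. Once the union is
everything, any two values differ by at most the total spread, and the mean lies between the
minimum and the maximum.
-/

open Finset
open scoped BigOperators

variable {V ι : Type*}

theorem sub_le_add_of_mem_union {x : V → ℝ} {U W : Set V} {α β : ℝ} {c : V}
    (hcU : c ∈ U) (hcW : c ∈ W)
    (hU : ∀ a ∈ U, ∀ b ∈ U, x a - x b ≤ α) (hW : ∀ a ∈ W, ∀ b ∈ W, x a - x b ≤ β) :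
    ∀ a ∈ U ∪ W, ∀ b ∈ U ∪ W, x a - x b ≤ α + β := by
  have hα := hU c hcU c hcU
  have hβ := hW c hcW c hcW
  rintro a (ha | ha) b (hb | hb)
  · linarith [hU a ha b hb]
  · linarith [hU a ha c hcU, hW c hcW b hb]
  · linarith [hW a ha c hcW, hU c hcU b hb]
  · linarith [hW a ha b hb]

section Neighborhoods

variable [DecidableEq ι] {G : SimpleGraph V} {S : ι → Set V} {x : V → ℝ} {w : ι → ℝ}

theorem exists_insert_sub_le_sum (hG : ∀ j k, G.Adj j k → ∃ i, j ∈ S i ∧ k ∈ S i)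
    (hconn : G.Connected) (hw : ∀ i, ∀ a ∈ S i, ∀ b ∈ S i, x a - x b ≤ w i)
    {T : Finset ι} {u v : V} (hu : u ∈ ⋃ i ∈ T, S i) (hv : v ∉ ⋃ i ∈ T, S i)
    (hT : ∀ a ∈ ⋃ i ∈ T, S i, ∀ b ∈ ⋃ i ∈ T, S i, x a - x b ≤ ∑ i ∈ T, w i) :
    ∃ p ∉ T, ∀ a ∈ ⋃ i ∈ insert p T, S i, ∀ b ∈ ⋃ i ∈ insert p T, S i,
      x a - x b ≤ ∑ i ∈ insert p T, w i := by
  obtain ⟨walk⟩ := hconn.preconnected u v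
  obtain ⟨d, -, hd_in, hd_out⟩ := walk.exists_boundary_dart _ hu hv
  obtain ⟨p, hp_fst, hp_snd⟩ := hG _ _ d.adj
  have hpT : p ∉ T := fun hpT => hd_out (Set.mem_biUnion hpT hp_snd)
  refine ⟨p, hpT, ?_⟩
  rw [set_biUnion_insert, sum_insert hpT]
  exact sub_le_add_of_mem_union hp_fst hd_in (hw p) hT

theorem sub_le_sum_of_connected [Fintype ι] (hG : ∀ j k, G.Adj j k → ∃ i, j ∈ S i ∧ k ∈ S i)
    (hconn : G.Connected) (hw : ∀ i, ∀ a ∈ S i, ∀ b ∈ S i, x a - x b ≤ w i)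
    (hw₀ : ∀ i, 0 ≤ w i) {i₀ : ι} {u : V} (hu : u ∈ S i₀) (a b : V) :
    x a - x b ≤ ∑ i, w i := by
  classical
  let Good : Finset ι → Prop := fun T =>
    i₀ ∈ T ∧ ∀ a ∈ ⋃ i ∈ T, S i, ∀ b ∈ ⋃ i ∈ T, S i, x a - x b ≤ ∑ i ∈ T, w i
  have h_start : Good {i₀} := ⟨mem_singleton_self i₀, by simpa using hw i₀⟩
  obtain ⟨T, hT_mem, hT_max⟩ :=
    exists_max_image ({T | Good T} : Finset (Finset ι)) card
      ⟨{i₀}, mem_filter.2 ⟨mem_univ _, h_start⟩⟩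
  obtain ⟨hi₀T, hT⟩ : Good T := (mem_filter.1 hT_mem).2
  have hu_T : u ∈ ⋃ i ∈ T, S i := Set.mem_biUnion hi₀T hu
  have h_cover : ∀ v, v ∈ ⋃ i ∈ T, S i := by
    intro v
    by_contra hv
    obtain ⟨p, hpT, hp⟩ := exists_insert_sub_le_sum hG hconn hw hu_T hv hT
    have := hT_max (insert p T) (mem_filter.2 ⟨mem_univ _, mem_insert_of_mem hi₀T, hp⟩)
    rw [card_insert_of_notMem hpT] at this
    omega
  calc x a - x b ≤ ∑ i ∈ T, w i := hT a (h_cover a) b (h_cover b)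
    _ ≤ ∑ i, w i := sum_le_univ_sum_of_nonneg hw₀

end Neighborhoods

theorem sub_le_sup'_sub_inf' {s : Finset V} (hs : s.Nonempty) (x : V → ℝ) {a b : V}
    (ha : a ∈ s) (hb : b ∈ s) : x a - x b ≤ s.sup' hs x - s.inf' hs x :=
  sub_le_sub (le_sup' x ha) (inf'_le x hb)

theorem stmt_17_general (n K : ℕ)
    (S : Fin K → Finset (Fin n)) (hSne : ∀ i, (S i).Nonempty)
    (G : SimpleGraph (Fin n))
    (hG : ∀ j k, G.Adj j k ↔ j ≠ k ∧ ∃ i, j ∈ S i ∧ k ∈ S i)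
    (hconn : G.Connected)
    (x : Fin n → ℝ) (m : ℝ) (hm : m = (∑ j, x j) / n) :
    ∀ i₀ : Fin K, ∀ j ∈ S i₀,
      |x j - m| ≤ ∑ i, ((S i).sup' (hSne i) x - (S i).inf' (hSne i) x) := by
  intro i₀ j hj
  have key (a b : Fin n) :
      x a - x b ≤ ∑ i, ((S i).sup' (hSne i) x - (S i).inf' (hSne i) x) := by
    refine sub_le_sum_of_connected (S := fun i => (S i : Set (Fin n)))
      (fun j k hjk => ((hG j k).1 hjk).2) hconn
      (fun i _ ha _ hb => sub_le_sup'_sub_inf' _ x ha hb)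
      (fun i => ?_) (mem_coe.2 hj) a b
    obtain ⟨c, hc⟩ := hSne i
    simpa only [sub_self] using sub_le_sup'_sub_inf' (hSne i) x hc hc
  have hm_mean : m = 𝔼 j, x j := by rw [hm, Fintype.expect_eq_sum_div_card, Fintype.card_fin]
  obtain ⟨a, -, ha⟩ := exists_le_of_expect_le ⟨j, mem_univ j⟩ hm_mean.ge
  obtain ⟨b, -, hb⟩ := exists_le_of_le_expect ⟨j, mem_univ j⟩ hm_mean.le
  rw [abs_sub_le_iff]
  constructor
  · linarith [key j a]
  · linarith [key b j]

theorem stmt_17 (n K : ℕ) (hn : 0 < n)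
    (S : Fin K → Finset (Fin n)) (hSne : ∀ i, (S i).Nonempty)
    (hcover : ∀ ℓ : Fin n, ∃ i, ℓ ∈ S i)
    (G : SimpleGraph (Fin n))
    (hG : ∀ j k, G.Adj j k ↔ j ≠ k ∧ ∃ i, j ∈ S i ∧ k ∈ S i)
    (hconn : G.Connected)
    (x : Fin n → ℝ) (m : ℝ) (hm : m = (∑ j, x j) / n) :
    ∀ i₀ : Fin K, ∀ j ∈ S i₀,
      |x j - m| ≤ ∑ i, ((S i).sup' (hSne i) x - (S i).inf' (hSne i) x) :=
  stmt_17_general n K S hSne G hG hconn x m hm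
end

section
/- Let $S_1, \dots, S_{\mathcal{K}}$ cover $\{1,\dots,n\}$ with the neighborhood graph connected (as above), and let $x \in \mathbb{R}^n$ with mean $m(x)$ and $f(x) = \sum_{\ell} (x_\ell - m(x))^2$. Then $f(x) \leq n \mathcal{K} \Big( \sum_{i=1}^{\mathcal{K}} \big( \max_{j \in S_i} x_j - \min_{j \in S_i} x_j \big) \Big)^2$. -/
open MeasureTheory

theorem stmt_18 (n K : ℕ) (hn : 0 < n)
    (S : Fin K → Finset (Fin n)) (hSne : ∀ i, (S i).Nonempty)
    (hcover : ∀ ℓ : Fin n, ∃ i, ℓ ∈ S i)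
    (G : SimpleGraph (Fin n))
    (hG : ∀ j k, G.Adj j k ↔ j ≠ k ∧ ∃ i, j ∈ S i ∧ k ∈ S i)
    (hconn : G.Connected)
    (x : Fin n → ℝ) (m : ℝ) (hm : m = (∑ j, x j) / n) :
    ∑ ℓ, (x ℓ - m) ^ 2
      ≤ n * K * (∑ i, ((S i).sup' (hSne i) x - (S i).inf' (hSne i) x)) ^ 2 := by
  haveI : Nonempty (Fin n) := ⟨⟨0, hn⟩⟩
  set a : Fin K → ℝ := fun i => (S i).inf' (hSne i) x with ha
  set b : Fin K → ℝ := fun i => (S i).sup' (hSne i) x with hb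
  have hab : ∀ i, a i ≤ b i := by
    intro i
    obtain ⟨ℓ, hℓ⟩ := hSne i
    exact le_trans (Finset.inf'_le _ hℓ) (Finset.le_sup' _ hℓ)
  have hmem : ∀ i, ∀ ℓ ∈ S i, x ℓ ∈ Set.Icc (a i) (b i) := fun i ℓ hℓ =>
    ⟨Finset.inf'_le _ hℓ, Finset.le_sup' _ hℓ⟩
  -- min and max
  obtain ⟨jmin, _, hjmin⟩ := Finset.exists_min_image Finset.univ x Finset.univ_nonempty
  obtain ⟨jmax, _, hjmax⟩ := Finset.exists_max_image Finset.univ x Finset.univ_nonempty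
  set μ := x jmin with hμ
  set M := x jmax with hM
  have hμle : ∀ ℓ, μ ≤ x ℓ := fun ℓ => hjmin ℓ (Finset.mem_univ ℓ)
  have hleM : ∀ ℓ, x ℓ ≤ M := fun ℓ => hjmax ℓ (Finset.mem_univ ℓ)
  -- coverage of [μ, M] by the intervals
  have hcov : Set.Icc μ M ⊆ ⋃ i, Set.Icc (a i) (b i) := by
    intro t ht
    by_contra hnt
    simp only [Set.mem_iUnion, not_exists] at hnt
    -- walk invariance: being < t is preserved along edges
    have hstep : ∀ j k : Fin n, G.Adj j k → x j < t → x k < t := by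
      intro j k hjk hxj
      obtain ⟨-, i, hji, hki⟩ := (hG j k).mp hjk
      have hj := hmem i j hji
      have hk := hmem i k hki
      have : ¬ (a i ≤ t ∧ t ≤ b i) := fun h => hnt i ⟨h.1, h.2⟩
      have hbi : b i < t := by
        rcases lt_or_ge (b i) t with h | h
        · exact h
        · exfalso; exact this ⟨le_trans hj.1 (le_of_lt hxj), h⟩
      exact lt_of_le_of_lt hk.2 hbi
    have hwalk : ∀ j k : Fin n, G.Walk j k → x j < t → x k < t := by
      intro j k w
      induction w with
      | nil => exact id
      | cons h p ih => intro hx; exact ih (hstep _ _ h hx)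
    -- x jmin < t
    obtain ⟨i0, hi0⟩ := hcover jmin
    have hj0 := hmem i0 jmin hi0
    have hne : x jmin ≠ t := by
      intro h; exact hnt i0 (h ▸ hj0)
    have hlt : x jmin < t := lt_of_le_of_ne ht.1 hne
    obtain ⟨w⟩ := (hconn.preconnected jmin jmax : G.Reachable jmin jmax)
    have := hwalk jmin jmax w hlt
    exact absurd ht.2 (not_le.mpr this)
  -- measure argument: M - μ ≤ ∑ (b i - a i)
  set R := ∑ i, (b i - a i) with hR
  have hRnn : 0 ≤ R := Finset.sum_nonneg fun i _ => sub_nonneg.mpr (hab i)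
  have hMμ : M - μ ≤ R := by
    have h1 : volume (Set.Icc μ M) ≤ ∑ i, volume (Set.Icc (a i) (b i)) := by
      calc volume (Set.Icc μ M) ≤ volume (⋃ i, Set.Icc (a i) (b i)) :=
            measure_mono hcov
        _ ≤ ∑' i, volume (Set.Icc (a i) (b i)) := measure_iUnion_le _
        _ = ∑ i, volume (Set.Icc (a i) (b i)) := tsum_fintype _
    rw [Real.volume_Icc] at h1
    have h2 : ∑ i, volume (Set.Icc (a i) (b i))
        = ENNReal.ofReal R := by
      rw [hR, ENNReal.ofReal_sum_of_nonneg (fun i _ => sub_nonneg.mpr (hab i))]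
      refine Finset.sum_congr rfl fun i _ => ?_
      rw [Real.volume_Icc]
    rw [h2] at h1
    exact (ENNReal.ofReal_le_ofReal_iff hRnn).mp h1
  -- m is between μ and M
  have hmμ : μ ≤ m := by
    rw [hm]
    rw [le_div_iff₀ (by positivity : (0:ℝ) < (n:ℝ))]
    calc μ * n = ∑ _j : Fin n, μ := by
          simp [Finset.sum_const, Finset.card_univ, mul_comm]
      _ ≤ ∑ j, x j := Finset.sum_le_sum fun j _ => hμle j
  have hmM : m ≤ M := by
    rw [hm, div_le_iff₀ (by positivity : (0:ℝ) < (n:ℝ))]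
    calc ∑ j, x j ≤ ∑ _j : Fin n, M := Finset.sum_le_sum fun j _ => hleM j
      _ = M * n := by simp [Finset.sum_const, Finset.card_univ, mul_comm]
  -- each term ≤ R^2
  have hterm : ∀ ℓ, (x ℓ - m) ^ 2 ≤ R ^ 2 := by
    intro ℓ
    have h1 : x ℓ - m ≤ R := le_trans (by linarith [hleM ℓ, hmμ]) hMμ
    have h2 : -(R) ≤ x ℓ - m := by
      have : m - x ℓ ≤ M - μ := by linarith [hμle ℓ, hmM]
      linarith
    exact sq_le_sq' h2 h1
  have hK : 1 ≤ K := by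
    obtain ⟨i, -⟩ := hcover ⟨0, hn⟩
    exact i.pos
  calc ∑ ℓ, (x ℓ - m) ^ 2 ≤ ∑ _ℓ : Fin n, R ^ 2 :=
        Finset.sum_le_sum fun ℓ _ => hterm ℓ
    _ = n * R ^ 2 := by simp [Finset.sum_const, Finset.card_univ]
    _ ≤ n * K * R ^ 2 := by
        have : (1:ℝ) ≤ K := by exact_mod_cast hK
        have h := mul_nonneg (mul_nonneg (Nat.cast_nonneg (α := ℝ) n)
          (by linarith : (0:ℝ) ≤ (K:ℝ) - 1)) (sq_nonneg R)
        nlinarith [h]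
end
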